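/- Let k ≥ 0 and let σ ∈ Σ_{2^{k+1}} be the permutation sending 2i to 2^k + i and 2i−1 to i for 1 ≤ i ≤ 2^k. Then the subgroup of Σ_{2^{k+1}} generated by the wreath product subgroup Σ_2 ≀ Σ_{2^k} (acting by permuting the two blocks {1,…,2^k}, {2^k+1,…,2^{k+1}} and within each block) together with σ is all of Σ_{2^{k+1}}. -/

import Mathlib

/-!
All transpositions inside a block preserve the blocks, and `σ` conjugates the transposition
`(0 1)` (which lies in the wreath product) to the transposition `(0 2^k)` joining the two blocks.
Transpositions within the blocks together with one transposition across them generate every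
transposition, hence the whole symmetric group.
-/

open Equiv

section Blocks

variable {α : Type*} [DecidableEq α]

theorem Equiv.swap_apply_iff_of_iff (p : α → Prop) {x y : α} (h : p x ↔ p y) (i : α) :
    p (swap x y i) ↔ p i := by
  rw [swap_apply_def]
  split_ifs with hx hy
  · rw [hx]; exact h.symm
  · rw [hy]; exact h
  · rfl

theorem Subgroup.eq_top_of_swap_mem_within_and_across [Finite α] (G : Subgroup (Perm α)) (p : α → Prop)
    (hblock : ∀ x y, (p x ↔ p y) → swap x y ∈ G) {a b : α} (ha : p a) (hb : ¬ p b)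
    (hab : swap a b ∈ G) : G = ⊤ := by
  have hcross : ∀ x y, p x → ¬ p y → swap x y ∈ G := fun x y hx hy =>
    SubmonoidClass.swap_mem_trans G
      (SubmonoidClass.swap_mem_trans G (hblock x a (iff_of_true hx ha)) hab)
      (hblock b y (iff_of_false hb hy))
  have hswap : ∀ x y, swap x y ∈ G := by
    intro x y
    by_cases hx : p x <;> by_cases hy : p y
    · exact hblock x y (iff_of_true hx hy)
    · exact hcross x y hx hy
    · exact swap_comm x y ▸ hcross y x hy hx
    · exact hblock x y (iff_of_false hx hy)
  rw [eq_top_iff, ← Perm.closure_isSwap, Subgroup.closure_le]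
  rintro _ ⟨x, y, -, rfl⟩
  exact hswap x y

end Blocks

theorem stmt_1 (k : ℕ) (σ : Equiv.Perm (Fin (2 ^ (k + 1))))
    (hσ : ∀ j : Fin (2 ^ (k + 1)),
      (σ j).val = if j.val % 2 = 0 then j.val / 2 else 2 ^ k + j.val / 2) :
    Subgroup.closure
      ({π : Equiv.Perm (Fin (2 ^ (k + 1))) |
          (∀ i, (π i).val < 2 ^ k ↔ i.val < 2 ^ k) ∨
          (∀ i, (π i).val < 2 ^ k ↔ ¬ i.val < 2 ^ k)} ∪ {σ}) = ⊤ := by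
  set G := Subgroup.closure (_ ∪ {σ})
  let i₀ : Fin (2 ^ (k + 1)) := ⟨0, Nat.two_pow_pos _⟩
  let i₁ : Fin (2 ^ (k + 1)) := ⟨1, Nat.one_lt_two_pow k.succ_ne_zero⟩
  have hblock : ∀ x y : Fin (2 ^ (k + 1)), (x.val < 2 ^ k ↔ y.val < 2 ^ k) → swap x y ∈ G :=
    fun x y h => Subgroup.subset_closure
      (Or.inl (Or.inl (swap_apply_iff_of_iff (fun i : Fin _ => i.val < 2 ^ k) h)))
  have hσG : σ ∈ G := Subgroup.subset_closure (Or.inr rfl)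
  have h01 : swap i₀ i₁ ∈ G := by
    rcases k with _ | k
    · -- the blocks are the singletons `{0}` and `{1}`, so `(0 1)` exchanges them
      refine Subgroup.subset_closure (Or.inl (Or.inr ?_))
      decide
    · exact hblock i₀ i₁ (iff_of_true (by simp [i₀]) (by simp [i₁]))
  refine Subgroup.eq_top_of_swap_mem_within_and_across G (fun i => i.val < 2 ^ k) hblock
    (a := σ i₀) (b := σ i₁) (by simp [hσ, i₀]) (by simp [hσ, i₁]) ?_
  rw [swap_apply_apply]
  exact G.mul_mem (G.mul_mem hσG h01) (G.inv_mem hσG)
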